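/- Assuming the Continuum Hypothesis, for every s ∈ (0,1] there exists a Hamel basis of ℝ over ℚ contained in the Cantor-like set C_r with r = 2^{-1/s}. -/

import Mathlib

open MeasureTheory Filter Set
open scoped ENNReal Pointwise Cardinal

/-- A Hamel basis: a basis of ℝ as a vector space over ℚ, viewed as a subset of ℝ. -/
def IsHamelBasis (B : Set ℝ) : Prop :=
  LinearIndependent ℚ ((↑) : B → ℝ) ∧ Submodule.span ℚ B = ⊤

/-- Left endpoint of the basic interval of the ratio-`r` Cantor construction indexed by a
binary string `w` (each bit selects the left or right subinterval of relative length `r`). -/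
def leftEnd (r : ℝ) : List Bool → ℝ
  | [] => 0
  | b :: w => (if b then 1 - r else 0) + r * leftEnd r w

/-- Stage `k` of the ratio-`r` Cantor construction: the union of the `2^k` closed
intervals of length `r^k` indexed by binary strings of length `k`. -/
def cantorStage (r : ℝ) (k : ℕ) : Set ℝ :=
  ⋃ w ∈ {w : List Bool | w.length = k}, Set.Icc (leftEnd r w) (leftEnd r w + r ^ k)

/-- The Cantor-like set `C_r` with ratio `r` (for `r = 1/3` this is the middle-thirds set). -/
def cantorLikeSet (r : ℝ) : Set ℝ := ⋂ k, cantorStage r k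

variable {r : ℝ}

lemma summable_aux (hr0 : 0 ≤ r) (hr1 : r < 1) (b : ℕ → Bool) :
    Summable (fun i => (if b i then (1-r) else 0) * r ^ i) := by
  apply Summable.of_nonneg_of_le (fun i => ?_) (fun i => ?_)
    ((summable_geometric_of_lt_one hr0 hr1).mul_left (1-r))
  · have : (0:ℝ) ≤ (if b i then (1-r) else 0) := by split <;> simp <;> linarith
    positivity
  · have : (if b i then (1-r) else 0) ≤ (1-r) := by split <;> simp <;> linarith
    apply mul_le_mul_of_nonneg_right this (by positivity)

lemma leftEnd_ofFn (b : ℕ → Bool) : ∀ k,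
    leftEnd r (List.ofFn fun i : Fin k => b i)
      = ∑ i ∈ Finset.range k, (if b i then (1-r) else 0) * r ^ i := by
  intro k
  induction k generalizing b with
  | zero => simp [leftEnd]
  | succ k ih =>
    rw [List.ofFn_succ, Finset.sum_range_succ']
    simp only [leftEnd, Fin.val_succ]
    rw [ih (fun i => b (i+1))]
    rw [Finset.mul_sum]
    simp [pow_succ, mul_comm, mul_assoc, mul_left_comm]
    exact add_comm _ _

lemma tail_bound (hr0 : 0 ≤ r) (hr1 : r < 1) (b : ℕ → Bool) (k : ℕ) :
    (∑' i, (if b (i+k) then (1-r) else 0) * r ^ (i+k)) ∈ Set.Icc (0:ℝ) (r ^ k) := by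
  constructor
  · apply tsum_nonneg
    intro i
    have : (0:ℝ) ≤ (if b (i+k) then (1-r) else 0) := by split <;> simp <;> linarith
    positivity
  · have h1 : (∑' i, (if b (i+k) then (1-r) else 0) * r ^ (i+k))
        ≤ ∑' i : ℕ, (1-r) * r ^ (i+k) := by
      apply Summable.tsum_le_tsum
      · intro i
        apply mul_le_mul_of_nonneg_right _ (by positivity)
        split <;> simp <;> linarith
      · exact ((summable_aux hr0 hr1 b).comp_injective (add_left_injective k))
      · exact (((summable_geometric_of_lt_one hr0 hr1).mul_left (1-r)).comp_injective
          (add_left_injective k))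
    have h2 : (∑' i : ℕ, (1-r) * r ^ (i+k)) = r ^ k := by
      have : ∀ i : ℕ, (1-r) * r ^ (i+k) = ((1-r) * r ^ k) * r ^ i := by
        intro i; rw [pow_add]; ring
      simp_rw [this]
      rw [tsum_mul_left, tsum_geometric_of_lt_one hr0 hr1]
      have h : (1:ℝ)-r ≠ 0 := by linarith
      field_simp
    linarith

lemma cpt_mem (hr0 : 0 ≤ r) (hr1 : r < 1) (b : ℕ → Bool) :
    (∑' i, (if b i then (1-r) else 0) * r ^ i) ∈ cantorLikeSet r := by
  rw [cantorLikeSet, Set.mem_iInter]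
  intro k
  rw [cantorStage, Set.mem_iUnion]
  refine ⟨List.ofFn fun i : Fin k => b i, ?_⟩
  rw [Set.mem_iUnion]
  refine ⟨by simp, ?_⟩
  rw [leftEnd_ofFn]
  have hsum := (summable_aux hr0 hr1 b)
  have := hsum.sum_add_tsum_nat_add k
  have htail := tail_bound hr0 hr1 b k
  constructor
  · nlinarith [htail.1, this]
  · nlinarith [htail.2, this]

lemma mem_span_of_mem_Icc (hr0 : 0 < r) (hr1 : r < 1) {n : ℕ} (hn : 1 ≤ (n:ℝ) * r)
    {x : ℝ} (hx : x ∈ Set.Icc (0:ℝ) n) :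
    x ∈ Submodule.span ℚ (cantorLikeSet r) := by
  have h1r : (0:ℝ) < 1 - r := by linarith
  set t : ℕ → ℝ := fun k => Nat.rec x
    (fun _ ti => (ti - (min n ⌊ti / (1-r)⌋₊) * (1-r)) / r) k with ht
  set c : ℕ → ℕ := fun i => min n ⌊t i / (1-r)⌋₊ with hc
  have hstep : ∀ i, t (i+1) = (t i - c i * (1-r)) / r := fun i => rfl
  have hinv : ∀ i, t i ∈ Set.Icc (0:ℝ) n := by
    intro i
    induction i with
    | zero => exact hx
    | succ i ih =>
      obtain ⟨h0, h1⟩ := ih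
      have hfl : (c i : ℝ) * (1-r) ≤ t i := by
        have h2 : (c i : ℝ) ≤ ⌊t i / (1-r)⌋₊ := by
          exact_mod_cast Nat.cast_le.mpr (min_le_right _ _)
        have h3 : (⌊t i / (1-r)⌋₊ : ℝ) ≤ t i / (1-r) := Nat.floor_le (by positivity)
        calc (c i : ℝ) * (1-r) ≤ (t i / (1-r)) * (1-r) := by nlinarith
          _ = t i := by field_simp
      have hub : t i - c i * (1-r) ≤ n * r := by
        rcases le_or_gt (n:ℕ) ⌊t i / (1-r)⌋₊ with h | h
        · have : c i = n := min_eq_left h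
          rw [this]; nlinarith
        · have hceq : c i = ⌊t i / (1-r)⌋₊ := min_eq_right h.le
          have h4 : t i / (1-r) < ⌊t i / (1-r)⌋₊ + 1 := Nat.lt_floor_add_one _
          have h5 : t i < (⌊t i / (1-r)⌋₊ + 1 : ℝ) * (1-r) := by
            calc t i = (t i / (1-r)) * (1-r) := by field_simp
              _ < _ := by nlinarith
          rw [hceq]
          nlinarith
      rw [hstep i]
      constructor
      · apply div_nonneg (by linarith) hr0.le
      · rw [div_le_iff₀ hr0]; nlinarith
  have hpart : ∀ k, x = (∑ i ∈ Finset.range k, (c i : ℝ) * (1-r) * r ^ i) + r ^ k * t k := by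
    intro k
    induction k with
    | zero => simp [ht]
    | succ k ih =>
      rw [Finset.sum_range_succ, ih, hstep k, pow_succ]
      have hr' : r ≠ 0 := hr0.ne'
      rw [mul_assoc (r ^ k) r, mul_div_cancel₀ _ hr']
      ring
  have hsumc : Summable (fun i => (c i : ℝ) * (1-r) * r ^ i) := by
    apply Summable.of_nonneg_of_le (fun i => by positivity) (fun i => ?_)
      ((summable_geometric_of_lt_one hr0.le hr1).mul_left ((n:ℝ) * (1-r)))
    have h2 : (c i : ℝ) ≤ n := by exact_mod_cast min_le_left _ _
    have h0 : (0:ℝ) ≤ r ^ i := by positivity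
    have h3 : (0:ℝ) ≤ 1 - r := by linarith
    nlinarith [mul_le_mul_of_nonneg_right (mul_le_mul_of_nonneg_right h2 h3) h0]
  have hx_eq : x = ∑' i, (c i : ℝ) * (1-r) * r ^ i := by
    have hlim1 : Tendsto (fun k => ∑ i ∈ Finset.range k, (c i : ℝ) * (1-r) * r ^ i)
        atTop (nhds (∑' i, (c i : ℝ) * (1-r) * r ^ i)) := hsumc.hasSum.tendsto_sum_nat
    have hlim2 : Tendsto (fun k => ∑ i ∈ Finset.range k, (c i : ℝ) * (1-r) * r ^ i)
        atTop (nhds x) := by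
      have heq : ∀ k, ∑ i ∈ Finset.range k, (c i : ℝ) * (1-r) * r ^ i = x - r ^ k * t k := by
        intro k; rw [hpart k]; ring
      simp_rw [heq]
      have : Tendsto (fun k : ℕ => r ^ k * t k) atTop (nhds 0) := by
        apply squeeze_zero (fun k => by have := (hinv k).1; positivity)
          (fun k => ?_) (by simpa using (tendsto_pow_atTop_nhds_zero_of_lt_one hr0.le hr1).const_mul (n:ℝ))
        · have h1 := (hinv k).2
          have h0 : (0:ℝ) ≤ r ^ k := by positivity
          calc r ^ k * t k ≤ r ^ k * n := by nlinarith
            _ = (n:ℝ) * r ^ k := by ring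
      simpa using (tendsto_const_nhds (x := x)).sub this
    exact tendsto_nhds_unique hlim2 hlim1
  -- split into n Cantor points
  have hcy : ∀ j : ℕ, (∑' i, (if decide (j < c i) then (1-r) else 0) * r ^ i)
      ∈ cantorLikeSet r := fun j => cpt_mem hr0.le hr1 _
  have hswap : ∑ j ∈ Finset.range n, (∑' i, (if decide (j < c i) then (1-r) else 0) * r ^ i)
      = ∑' i, ∑ j ∈ Finset.range n, (if decide (j < c i) then (1-r) else 0) * r ^ i := by
    exact (Summable.tsum_finsetSum (fun j _ => summable_aux hr0.le hr1 _)).symm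
  have hinner : ∀ i, ∑ j ∈ Finset.range n, (if decide (j < c i) then (1-r) else 0) * r ^ i
      = (c i : ℝ) * (1-r) * r ^ i := by
    intro i
    have hci : c i ≤ n := min_le_left _ _
    rw [← Finset.sum_subset (Finset.range_subset_range.mpr hci)
      (fun j _ hj => by simp at hj ⊢; intro h; omega)]
    rw [Finset.sum_congr rfl (fun j hj => by
      simp at hj; simp [hj] : ∀ j ∈ Finset.range (c i), (if decide (j < c i) then (1-r) else 0) * r ^ i = (1-r) * r ^ i)]
    rw [Finset.sum_const, Finset.card_range]
    push_cast; ring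
  have hxsum : x = ∑ j ∈ Finset.range n,
      (∑' i, (if decide (j < c i) then (1-r) else 0) * r ^ i) := by
    rw [hswap]
    simp_rw [hinner]
    exact hx_eq
  rw [hxsum]
  exact Submodule.sum_mem _ (fun j _ => Submodule.subset_span (hcy j))

lemma span_cantor_top (hr0 : 0 < r) (hr1 : r < 1) :
    Submodule.span ℚ (cantorLikeSet r) = ⊤ := by
  set n : ℕ := max 1 ⌈1/r⌉₊ with hndef
  have hn1 : (1:ℕ) ≤ n := le_max_left _ _
  have hn : 1 ≤ (n:ℝ) * r := by
    have h1 : (1/r : ℝ) ≤ ⌈1/r⌉₊ := Nat.le_ceil _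
    have h2 : ((⌈1/r⌉₊ : ℕ) : ℝ) ≤ n := by exact_mod_cast le_max_right _ _
    have : (1/r : ℝ) ≤ n := le_trans h1 h2
    calc (1:ℝ) = (1/r) * r := by field_simp
      _ ≤ (n:ℝ) * r := by nlinarith
  have hIcc : ∀ y : ℝ, y ∈ Set.Icc (0:ℝ) 1 → y ∈ Submodule.span ℚ (cantorLikeSet r) := by
    intro y hy
    apply mem_span_of_mem_Icc hr0 hr1 hn
    refine ⟨hy.1, le_trans hy.2 ?_⟩
    exact_mod_cast hn1
  rw [eq_top_iff]
  intro x _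
  obtain ⟨q, hq⟩ := exists_rat_gt |x|
  have hq0 : (0:ℝ) < q := lt_of_le_of_lt (abs_nonneg x) hq
  have hq0' : (0:ℚ) < q := by exact_mod_cast hq0
  have hy : (x + q) / (2*q) ∈ Set.Icc (0:ℝ) 1 := by
    have hax := abs_lt.mp hq
    constructor
    · apply div_nonneg (by linarith [hax.1]) (by linarith)
    · rw [div_le_one (by linarith)]; linarith [hax.2]
  have h1mem : (1:ℝ) ∈ Submodule.span ℚ (cantorLikeSet r) :=
    hIcc 1 ⟨zero_le_one, le_refl _⟩
  have hymem := hIcc _ hy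
  have hx : x = ((2*q : ℚ) : ℝ) * ((x + q) / (2*q)) - ((q:ℚ):ℝ) * 1 := by
    push_cast
    field_simp
    ring
  rw [hx]
  have h1 : ((2*q : ℚ) : ℝ) * ((x + q) / (2*q)) = (2*q : ℚ) • ((x + q) / (2*q)) := by
    rw [Rat.smul_def]
  have h2 : ((q:ℚ):ℝ) * 1 = (q:ℚ) • (1:ℝ) := by rw [Rat.smul_def]
  rw [h1, h2]
  exact Submodule.sub_mem _ (Submodule.smul_mem _ _ hymem) (Submodule.smul_mem _ _ h1mem)

theorem CH_hamel_basis_in_cantorLikeSet (hCH : Cardinal.mk (Set ℕ) = Cardinal.aleph 1)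
    (s : ℝ) (hs₀ : 0 < s) (hs₁ : s ≤ 1) :
    ∃ B : Set ℝ, B ⊆ cantorLikeSet (Real.rpow 2 (-(1 / s))) ∧ IsHamelBasis B := by
  set r := Real.rpow 2 (-(1 / s)) with hrdef
  have hr0 : 0 < r := Real.rpow_pos_of_pos two_pos _
  have hr1 : r < 1 := by
    apply Real.rpow_lt_one_of_one_lt_of_neg one_lt_two
    have : 0 < 1 / s := by positivity
    linarith
  obtain ⟨B, hBs, hBspan, hBli⟩ := exists_linearIndependent ℚ (cantorLikeSet r)
  exact ⟨B, hBs, hBli, by rw [hBspan]; exact span_cantor_top hr0 hr1⟩
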